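/- arXiv:0704.1633 — 2 statements merged into one kernel-verified Lean document; each statement's English description precedes it below -/
import Mathlib

section
/- Let H be a real Hilbert space and let { b_n : n ∈ ℕ } ∪ { c_{n,i} : n, i ∈ ℕ } ∪ { a_f : f ∈ ℕ^ℕ } be an orthonormal family in H (all vectors pairwise distinct and orthonormal, indexed injectively). Let N = { a_g + b_m + (1/2) c_{m, g(m)} : m ∈ ℕ, g ∈ ℕ^ℕ } ∪ {0}. Then for every f ∈ ℕ^ℕ and every n ∈ ℕ, dist( a_f + b_n − (1/2) c_{n, f(n)}, N ) = 1; in particular ‖(a_f + b_n − (1/2) c_{n,f(n)}) − y‖ ≥ 1 for every y ∈ N, with equality for y = a_f + b_n + (1/2) c_{n,f(n)}. -/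
open RealInnerProductSpace

/-!
Write `x = a_f + b_n - ½ c_{n,f(n)}` and let `y` be a point of `N`. Pairing `x - y` with a unit
vector `u` gives `|⟪u, x - y⟫| ≤ ‖x - y‖`, so it suffices to find a `u` with `⟪u, x - y⟫ = 1`.
For `y = 0`, or `y = a_g + b_m + ½ c_{m,g(m)}` with `g ≠ f`, take `u = a_f`; for `g = f`, `m ≠ n`
take `u = b_n`; and for `g = f`, `m = n` one has `x - y = -c_{n,f(n)}`, of norm exactly `1`.
-/

lemma Metric.infDist_eq_of_mem_of_forall_le {α : Type*} [PseudoMetricSpace α] {x y : α}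
    {s : Set α} {r : ℝ} (hy : y ∈ s) (hxy : dist x y = r) (h : ∀ z ∈ s, r ≤ dist x z) :
    Metric.infDist x s = r :=
  le_antisymm (hxy ▸ Metric.infDist_le_dist_of_mem hy) ((Metric.le_infDist ⟨y, hy⟩).2 h)

section

variable {H : Type*} [NormedAddCommGroup H] [InnerProductSpace ℝ H]

lemma one_le_norm_of_inner_eq_one {u v : H} (hu : ‖u‖ = 1) (h : ⟪u, v⟫ = 1) : 1 ≤ ‖v‖ := by
  simpa [h, hu] using abs_real_inner_le_norm u v

variable {b : ℕ → H} {c : ℕ × ℕ → H} {a : (ℕ → ℕ) → H}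
  (hon : Orthonormal ℝ (Sum.elim b (Sum.elim c a)))
include hon

open Classical in
lemma inner_left_a_add_b_add_smul_c (f g : ℕ → ℕ) (m : ℕ) (t : ℝ) :
    ⟪a f, a g + b m + t • c (m, g m)⟫ = if f = g then 1 else 0 := by
  have h := orthonormal_iff_ite.mp hon
  have haa := h (.inr (.inr f)) (.inr (.inr g))
  have hab := h (.inr (.inr f)) (.inl m)
  have hac := h (.inr (.inr f)) (.inr (.inl (m, g m)))
  simp only [Sum.elim_inl, Sum.elim_inr, Sum.inr.injEq, reduceCtorEq, if_false] at haa hab hac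
  simp [inner_add_right, inner_smul_right, haa, hab, hac]

open Classical in
lemma inner_left_b_add_b_add_smul_c (n : ℕ) (g : ℕ → ℕ) (m : ℕ) (t : ℝ) :
    ⟪b n, a g + b m + t • c (m, g m)⟫ = if n = m then 1 else 0 := by
  have h := orthonormal_iff_ite.mp hon
  have hba := h (.inl n) (.inr (.inr g))
  have hbb := h (.inl n) (.inl m)
  have hbc := h (.inl n) (.inr (.inl (m, g m)))
  simp only [Sum.elim_inl, Sum.elim_inr, Sum.inl.injEq, reduceCtorEq, if_false] at hba hbb hbc
  simp [inner_add_right, inner_smul_right, hba, hbb, hbc]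

lemma norm_sub_eq_one_of_sign_flip (f : ℕ → ℕ) (n : ℕ) :
    ‖(a f + b n - (1/2 : ℝ) • c (n, f n)) - (a f + b n + (1/2 : ℝ) • c (n, f n))‖ = 1 := by
  rw [show a f + b n - (1/2 : ℝ) • c (n, f n) - (a f + b n + (1/2 : ℝ) • c (n, f n))
    = -c (n, f n) by module, norm_neg]
  exact hon.1 (.inr (.inl (n, f n)))

lemma one_le_norm_sub_of_mem (f : ℕ → ℕ) (n : ℕ) {y : H}
    (hy : y ∈ {x : H | ∃ (g : ℕ → ℕ) (m : ℕ), x = a g + b m + (1/2 : ℝ) • c (m, g m)} ∪ {0}) :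
    1 ≤ ‖(a f + b n - (1/2 : ℝ) • c (n, f n)) - y‖ := by
  have hx : a f + b n - (1/2 : ℝ) • c (n, f n) = a f + b n + (-1/2 : ℝ) • c (n, f n) := by
    module
  have hinner_a := inner_left_a_add_b_add_smul_c hon f
  have hinner_b := inner_left_b_add_b_add_smul_c hon n
  have ha : ‖a f‖ = 1 := hon.1 (.inr (.inr f))
  have hb : ‖b n‖ = 1 := hon.1 (.inl n)
  rcases hy with ⟨g, m, rfl⟩ | rfl
  · by_cases hfg : f = g
    · subst hfg
      by_cases hnm : n = m
      · subst hnm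
        exact (norm_sub_eq_one_of_sign_flip hon f n).ge
      · refine one_le_norm_of_inner_eq_one hb ?_
        rw [hx, inner_sub_right, hinner_b, hinner_b, if_pos rfl, if_neg hnm, sub_zero]
    · refine one_le_norm_of_inner_eq_one ha ?_
      rw [hx, inner_sub_right, hinner_a, hinner_a, if_pos rfl, if_neg hfg, sub_zero]
  · exact one_le_norm_of_inner_eq_one ha (by rw [sub_zero, hx, hinner_a, if_pos rfl])

end

theorem stmt14_general {H : Type*} [NormedAddCommGroup H] [InnerProductSpace ℝ H]
    (b : ℕ → H) (c : ℕ × ℕ → H) (a : (ℕ → ℕ) → H)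
    (hon : Orthonormal ℝ (Sum.elim b (Sum.elim c a)))
    (N : Set H)
    (hN : N = {x : H | ∃ (g : ℕ → ℕ) (m : ℕ), x = a g + b m + (1/2 : ℝ) • c (m, g m)} ∪ {0}) :
    ∀ (f : ℕ → ℕ) (n : ℕ),
      Metric.infDist (a f + b n - (1/2 : ℝ) • c (n, f n)) N = 1 ∧
      (∀ y ∈ N, 1 ≤ ‖(a f + b n - (1/2 : ℝ) • c (n, f n)) - y‖) ∧
      ‖(a f + b n - (1/2 : ℝ) • c (n, f n)) - (a f + b n + (1/2 : ℝ) • c (n, f n))‖ = 1 := by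
  intro f n
  subst hN
  have hlower := fun y (hy : y ∈ _) => one_le_norm_sub_of_mem hon f n hy
  have hnearest := norm_sub_eq_one_of_sign_flip hon f n
  refine ⟨Metric.infDist_eq_of_mem_of_forall_le (Or.inl ⟨f, n, rfl⟩) ?_ ?_, hlower, hnearest⟩
  · rwa [dist_eq_norm]
  · simpa only [dist_eq_norm] using hlower

/-- Claim 2 (consistency of paths) in the proof that `T_N` has `TP₂`: with an orthonormal
family `{bₙ} ∪ {c_{n,i}} ∪ {a_f}` and black set
`N = {a_g + bₘ + (1/2)c_{m,g(m)} : m ∈ ℕ, g ∈ ℕ^ℕ} ∪ {0}`, for every `f` and `n`,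
`dist(a_f + bₙ − (1/2)c_{n,f(n)}, N) = 1`; every point of `N` is at distance `≥ 1`, with
equality at `a_f + bₙ + (1/2)c_{n,f(n)}`. -/
theorem stmt14 {H : Type*} [NormedAddCommGroup H] [InnerProductSpace ℝ H] [CompleteSpace H]
    (b : ℕ → H) (c : ℕ × ℕ → H) (a : (ℕ → ℕ) → H)
    (hon : Orthonormal ℝ (Sum.elim b (Sum.elim c a)))
    (N : Set H)
    (hN : N = {x : H | ∃ (g : ℕ → ℕ) (m : ℕ), x = a g + b m + (1/2 : ℝ) • c (m, g m)} ∪ {0}) :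
    ∀ (f : ℕ → ℕ) (n : ℕ),
      Metric.infDist (a f + b n - (1/2 : ℝ) • c (n, f n)) N = 1 ∧
      (∀ y ∈ N, 1 ≤ ‖(a f + b n - (1/2 : ℝ) • c (n, f n)) - y‖) ∧
      ‖(a f + b n - (1/2 : ℝ) • c (n, f n)) - (a f + b n + (1/2 : ℝ) • c (n, f n))‖ = 1 :=
  stmt14_general b c a hon N hN
end

section
/- Let H be a real Hilbert space and let H_0 ⊆ H_1 and H_0 ⊆ H_2 be closed subspaces such that every vector of H_1 ∩ H_0^⊥ is orthogonal to every vector of H_2 ∩ H_0^⊥. Let d_1 : H_1 → [0,1] and d_2 : H_2 → [0,1] each satisfy axiom (2) on their domains (d_i(y) ≤ d_i(x) + ‖x − y‖), suppose d_1 and d_2 agree on H_0, and suppose their common restriction d_0 to H_0 satisfies axiom (1) on H_0 (for every x ∈ H_0 with d_0(x) < 1 and every ε > 0 there is y ∈ H_0 with d_0(y) ≤ ε and |d_0(x) − ‖x − y‖| ≤ ε). Define, for v in the closure H_3 of H_1 + H_2, d_3(v) = min( sqrt( d_1(P_{H_1}(v))² + ‖P_{H_2 ∩ H_0^⊥}(v)‖²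 ), sqrt( d_2(P_{H_2}(v))² + ‖P_{H_1 ∩ H_0^⊥}(v)‖² ) ). Then d_3(v) = d_1(v) for every v ∈ H_1 and d_3(v) = d_2(v) for every v ∈ H_2. -/
/-!
For `v ∈ H₁` write `v = x + u` with `x = P_{H₀} v` and `u ∈ H₁ ⊓ H₀ᗮ`. Since `H₂ = H₀ ⊔ (H₂ ⊓ H₀ᗮ)`,
the orthogonality of `H₁ ⊓ H₀ᗮ` and `H₂ ⊓ H₀ᗮ` makes `u ⟂ H₂`, so `P_{H₁} v = v`,
`P_{H₂ ⊓ H₀ᗮ} v = 0`, `P_{H₂} v = x`, `P_{H₁ ⊓ H₀ᗮ} v = u`, and `d₃ v = min (d₁ v) √(d₀ x ² + ‖u‖ ²)`.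
To see that the minimum is `d₁ v`, use axiom (1) to pick `y ∈ H₀` with `d₀ y ≈ 0` and
`‖x - y‖ ≈ d₀ x`; axiom (2) and Pythagoras give `d₁ v ≤ d₀ y + ‖v - y‖ ≈ √(d₀ x ² + ‖u‖ ²)`.
When `d₀ x = 1`, axiom (1) says nothing, but then `d₁ v ≤ 1` suffices.
-/

open scoped RealInnerProductSpace

theorem Real.sqrt_add_sq_add_sq_le {a b ε : ℝ} (ha : 0 ≤ a) (hε : 0 ≤ ε) :
    √((a + ε) ^ 2 + b ^ 2) ≤ √(a ^ 2 + b ^ 2) + ε := by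
  have hs : a ≤ √(a ^ 2 + b ^ 2) := Real.le_sqrt_of_sq_le (by nlinarith)
  have hsq := Real.sq_sqrt (show 0 ≤ a ^ 2 + b ^ 2 by positivity)
  rw [Real.sqrt_le_iff]
  constructor <;> nlinarith

section Amalgamation

open Submodule

variable {H : Type*} [NormedAddCommGroup H]

/-- Axiom (1) of `T₀` for `d` on the domain `K`. -/
def ApproxDistToZeroSet (d : H → ℝ) (K : Set H) : Prop :=
  ∀ x ∈ K, d x < 1 → ∀ ε > 0, ∃ y ∈ K, d y ≤ ε ∧ |d x - ‖x - y‖| ≤ ε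

theorem ApproxDistToZeroSet.congr {d d' : H → ℝ} {K : Set H} (h : ApproxDistToZeroSet d K)
    (hd : Set.EqOn d d' K) : ApproxDistToZeroSet d' K := by
  intro x hx hlt ε hε
  obtain ⟨y, hy, hdy, hxy⟩ := h x hx (by rwa [hd hx]) ε hε
  exact ⟨y, hy, hd hy ▸ hdy, hd hx ▸ hxy⟩

variable [InnerProductSpace ℝ H]

theorem le_sqrt_sq_add_norm_sq_of_approxDistToZeroSet {d : H → ℝ} {K : Submodule ℝ H}
    (hd : ApproxDistToZeroSet d K) {x v : H} (hx : x ∈ K) (hvx : v - x ∈ Kᗮ)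
    (hdx : 0 ≤ d x) (hdv : d v ≤ 1) (hlip : ∀ y ∈ K, d v ≤ d y + ‖y - v‖) :
    d v ≤ √(d x ^ 2 + ‖v - x‖ ^ 2) := by
  rcases lt_or_ge (d x) 1 with hlt | hge
  · refine le_of_forall_pos_le_add fun ε hε => ?_
    obtain ⟨y, hy, hdy, hxy⟩ := hd x hx hlt (ε / 2) (half_pos hε)
    have hxy' : ‖x - y‖ ≤ d x + ε / 2 := by linarith [(abs_le.mp hxy).1]
    have hpyth : ‖y - v‖ = √(‖x - y‖ ^ 2 + ‖v - x‖ ^ 2) := by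
      have hperp : ⟪x - y, v - x⟫ = 0 := hvx _ (K.sub_mem hx hy)
      rw [norm_sub_rev, ← sub_add_sub_cancel v x y, add_comm, sq, sq,
        (norm_add_eq_sqrt_iff_real_inner_eq_zero).mpr hperp]
    calc d v ≤ d y + ‖y - v‖ := hlip y hy
      _ ≤ ε / 2 + √((d x + ε / 2) ^ 2 + ‖v - x‖ ^ 2) := by
        rw [hpyth]
        gcongr
      _ ≤ ε / 2 + (√(d x ^ 2 + ‖v - x‖ ^ 2) + ε / 2) := by
        gcongr
        exact Real.sqrt_add_sq_add_sq_le hdx (by positivity)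
      _ = √(d x ^ 2 + ‖v - x‖ ^ 2) + ε := by ring
  · calc d v ≤ 1 := hdv
      _ ≤ √(d x ^ 2 + ‖v - x‖ ^ 2) := Real.one_le_sqrt.mpr (by nlinarith [sq_nonneg ‖v - x‖])

section Projections

variable {K A B : Submodule ℝ H} [K.HasOrthogonalProjection] {v : H}

theorem inf_orthogonal_isOrtho_of_le (hKB : K ≤ B) (h : A ⊓ Kᗮ ⟂ B ⊓ Kᗮ) : A ⊓ Kᗮ ⟂ B := by
  rw [← sup_orthogonal_inf_of_hasOrthogonalProjection hKB, isOrtho_sup_right, inf_comm Kᗮ]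
  exact ⟨(isOrtho_orthogonal_left K).mono_left inf_le_right, h⟩

theorem sub_starProjection_mem_inf_orthogonal (hKA : K ≤ A) (hv : v ∈ A) :
    v - K.starProjection v ∈ A ⊓ Kᗮ :=
  ⟨A.sub_mem hv (hKA (K.starProjection_apply_mem v)), K.sub_starProjection_mem_orthogonal v⟩

theorem starProjection_inf_orthogonal_of_mem [(A ⊓ Kᗮ).HasOrthogonalProjection] (hKA : K ≤ A)
    (hv : v ∈ A) : (A ⊓ Kᗮ).starProjection v = v - K.starProjection v := by
  refine eq_starProjection_of_mem_orthogonal (sub_starProjection_mem_inf_orthogonal hKA hv) ?_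
  rw [sub_sub_cancel]
  exact ((isOrtho_orthogonal_right K).mono_right inf_le_right).le (K.starProjection_apply_mem v)

theorem starProjection_eq_of_isOrtho_inf_orthogonal [B.HasOrthogonalProjection] (hKA : K ≤ A)
    (hKB : K ≤ B) (h : A ⊓ Kᗮ ⟂ B ⊓ Kᗮ) (hv : v ∈ A) :
    B.starProjection v = K.starProjection v :=
  eq_starProjection_of_mem_orthogonal (hKB (K.starProjection_apply_mem v))
    ((inf_orthogonal_isOrtho_of_le hKB h).le (sub_starProjection_mem_inf_orthogonal hKA hv))

theorem starProjection_inf_orthogonal_eq_zero_of_isOrtho [(B ⊓ Kᗮ).HasOrthogonalProjection]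
    (hKA : K ≤ A) (h : A ⊓ Kᗮ ⟂ B ⊓ Kᗮ) (hv : v ∈ A) : (B ⊓ Kᗮ).starProjection v = 0 := by
  rw [starProjection_apply_eq_zero_iff, ← sub_add_cancel v (K.starProjection v)]
  exact add_mem (h.le (sub_starProjection_mem_inf_orthogonal hKA hv))
    (((isOrtho_orthogonal_right K).mono_right inf_le_right).le (K.starProjection_apply_mem v))

end Projections

noncomputable def amalgamatedDist (K A B : Submodule ℝ H) [A.HasOrthogonalProjection]
    [B.HasOrthogonalProjection] [(A ⊓ Kᗮ).HasOrthogonalProjection]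
    [(B ⊓ Kᗮ).HasOrthogonalProjection] (dA dB : H → ℝ) (v : H) : ℝ :=
  min (√(dA (A.starProjection v) ^ 2 + ‖(B ⊓ Kᗮ).starProjection v‖ ^ 2))
    (√(dB (B.starProjection v) ^ 2 + ‖(A ⊓ Kᗮ).starProjection v‖ ^ 2))

section AmalgamatedDist

variable {K A B : Submodule ℝ H} [A.HasOrthogonalProjection] [B.HasOrthogonalProjection]
  [(A ⊓ Kᗮ).HasOrthogonalProjection] [(B ⊓ Kᗮ).HasOrthogonalProjection]

theorem amalgamatedDist_comm (dA dB : H → ℝ) :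
    amalgamatedDist K A B dA dB = amalgamatedDist K B A dB dA :=
  funext fun _ => min_comm _ _

variable [K.HasOrthogonalProjection]

theorem amalgamatedDist_eq_left {dA dB : H → ℝ} (hKA : K ≤ A) (hKB : K ≤ B)
    (h : A ⊓ Kᗮ ⟂ B ⊓ Kᗮ) (hdA : ∀ x ∈ A, dA x ∈ Set.Icc (0 : ℝ) 1)
    (hlip : ∀ x ∈ A, ∀ y ∈ A, dA y ≤ dA x + ‖x - y‖) (hagree : Set.EqOn dA dB K)
    (happrox : ApproxDistToZeroSet dA K) {v : H} (hv : v ∈ A) :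
    amalgamatedDist K A B dA dB v = dA v := by
  have hx : K.starProjection v ∈ K := K.starProjection_apply_mem v
  rw [amalgamatedDist, starProjection_eq_self_iff.mpr hv,
    starProjection_inf_orthogonal_eq_zero_of_isOrtho hKA h hv,
    starProjection_eq_of_isOrtho_inf_orthogonal hKA hKB h hv,
    starProjection_inf_orthogonal_of_mem hKA hv, ← hagree hx, norm_zero,
    zero_pow two_ne_zero, add_zero, Real.sqrt_sq (hdA v hv).1]
  exact min_eq_left <| le_sqrt_sq_add_norm_sq_of_approxDistToZeroSet happrox hx
    (K.sub_starProjection_mem_orthogonal v) (hdA _ (hKA hx)).1 (hdA v hv).2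
    (fun y hy => hlip y (hKA hy) v hv)

end AmalgamatedDist

end Amalgamation

theorem stmt16_general {H : Type*} [NormedAddCommGroup H] [InnerProductSpace ℝ H]
    (H0 H1 H2 : Submodule ℝ H)
    [CompleteSpace H0] [CompleteSpace H1] [CompleteSpace H2]
    [CompleteSpace ↥(H1 ⊓ H0ᗮ)] [CompleteSpace ↥(H2 ⊓ H0ᗮ)]
    (h01 : H0 ≤ H1) (h02 : H0 ≤ H2)
    (horth : ∀ x ∈ H1 ⊓ H0ᗮ, ∀ y ∈ H2 ⊓ H0ᗮ, ⟪x, y⟫ = 0)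
    (d1 d2 : H → ℝ)
    (hr1 : ∀ x ∈ H1, d1 x ∈ Set.Icc (0 : ℝ) 1)
    (hr2 : ∀ x ∈ H2, d2 x ∈ Set.Icc (0 : ℝ) 1)
    (ax2_1 : ∀ x ∈ H1, ∀ y ∈ H1, d1 y ≤ d1 x + ‖x - y‖)
    (ax2_2 : ∀ x ∈ H2, ∀ y ∈ H2, d2 y ≤ d2 x + ‖x - y‖)
    (hagree : ∀ x ∈ H0, d1 x = d2 x)
    (ax1_0 : ∀ x ∈ H0, d1 x < 1 → ∀ ε > 0, ∃ y ∈ H0, d1 y ≤ ε ∧ |d1 x - ‖x - y‖| ≤ ε)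
    (d3 : H → ℝ)
    (hd3 : ∀ v ∈ (H1 ⊔ H2).topologicalClosure,
      d3 v = min
        (Real.sqrt (d1 ((Submodule.orthogonalProjectionOnto H1 v : H)) ^ 2 +
          ‖(Submodule.orthogonalProjectionOnto (H2 ⊓ H0ᗮ) v : H)‖ ^ 2))
        (Real.sqrt (d2 ((Submodule.orthogonalProjectionOnto H2 v : H)) ^ 2 +
          ‖(Submodule.orthogonalProjectionOnto (H1 ⊓ H0ᗮ) v : H)‖ ^ 2))) :
    (∀ v ∈ H1, d3 v = d1 v) ∧ (∀ v ∈ H2, d3 v = d2 v) := by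
  have hd3' : ∀ v ∈ H1 ⊔ H2, d3 v = amalgamatedDist H0 H1 H2 d1 d2 v := fun v hv =>
    hd3 v (Submodule.le_topologicalClosure _ hv)
  have hortho : H1 ⊓ H0ᗮ ⟂ H2 ⊓ H0ᗮ := Submodule.isOrtho_iff_inner_eq.mpr horth
  have hagree' : Set.EqOn d1 d2 H0 := fun x hx => hagree x hx
  have happrox : ApproxDistToZeroSet d1 H0 := ax1_0
  refine ⟨fun v hv => ?_, fun v hv => ?_⟩
  · rw [hd3' v (Submodule.mem_sup_left hv)]
    exact amalgamatedDist_eq_left h01 h02 hortho hr1 ax2_1 hagree' happrox hv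
  · rw [hd3' v (Submodule.mem_sup_right hv), amalgamatedDist_comm]
    exact amalgamatedDist_eq_left h02 h01 hortho.symm hr2 ax2_2 hagree'.symm
      (happrox.congr hagree') hv

/-- Free amalgamation lemma for the class `K_r` of models of `T₀`: the amalgamated
distance function `d₃` on the closure `H₃` of `H₁ + H₂` extends both `d₁` and `d₂`. -/
theorem stmt16 {H : Type*} [NormedAddCommGroup H] [InnerProductSpace ℝ H] [CompleteSpace H]
    (H0 H1 H2 : Submodule ℝ H)
    [CompleteSpace H0] [CompleteSpace H1] [CompleteSpace H2]
    [CompleteSpace ↥(H1 ⊓ H0ᗮ)] [CompleteSpace ↥(H2 ⊓ H0ᗮ)]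
    (h01 : H0 ≤ H1) (h02 : H0 ≤ H2)
    (horth : ∀ x ∈ H1 ⊓ H0ᗮ, ∀ y ∈ H2 ⊓ H0ᗮ, ⟪x, y⟫ = 0)
    (d1 d2 : H → ℝ)
    (hr1 : ∀ x ∈ H1, d1 x ∈ Set.Icc (0 : ℝ) 1)
    (hr2 : ∀ x ∈ H2, d2 x ∈ Set.Icc (0 : ℝ) 1)
    (ax2_1 : ∀ x ∈ H1, ∀ y ∈ H1, d1 y ≤ d1 x + ‖x - y‖)
    (ax2_2 : ∀ x ∈ H2, ∀ y ∈ H2, d2 y ≤ d2 x + ‖x - y‖)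
    (hagree : ∀ x ∈ H0, d1 x = d2 x)
    (ax1_0 : ∀ x ∈ H0, d1 x < 1 → ∀ ε > 0, ∃ y ∈ H0, d1 y ≤ ε ∧ |d1 x - ‖x - y‖| ≤ ε)
    (d3 : H → ℝ)
    (hd3 : ∀ v ∈ (H1 ⊔ H2).topologicalClosure,
      d3 v = min
        (Real.sqrt (d1 ((Submodule.orthogonalProjectionOnto H1 v : H)) ^ 2 +
          ‖(Submodule.orthogonalProjectionOnto (H2 ⊓ H0ᗮ) v : H)‖ ^ 2))
        (Real.sqrt (d2 ((Submodule.orthogonalProjectionOnto H2 v : H)) ^ 2 +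
          ‖(Submodule.orthogonalProjectionOnto (H1 ⊓ H0ᗮ) v : H)‖ ^ 2))) :
    (∀ v ∈ H1, d3 v = d1 v) ∧ (∀ v ∈ H2, d3 v = d2 v) :=
  stmt16_general H0 H1 H2 h01 h02 horth d1 d2 hr1 hr2 ax2_1 ax2_2 hagree ax1_0 d3 hd3
end
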